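/- arXiv:1909.05406 — 3 statements merged into one kernel-verified Lean document; each statement's English description precedes it below -/
import Mathlib

section
/- Suppose all configurations of a variation Γ are convex subsets of the grid space ℤ² (containing the origin and connected). Then for configurations C, C' of Γ, a node v ∈ C, and a time t with d_C(v_gen, v) ≤ t, one has C ≡'_{t,v} C' if and only if C' is a consistent extension of M(v,t,C); i.e., condition (2) of the general criterion is automatic. -/
open scoped Classical

/-- Two grid positions are adjacent iff their L1 distance is 1. -/
def gridAdj (p q : ℤ × ℤ) : Prop := |p.1 - q.1| + |p.2 - q.2| = 1

lemma gridAdj_symm {p q : ℤ × ℤ} (h : gridAdj p q) : gridAdj q p := by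
  unfold gridAdj at h ⊢
  rw [abs_sub_comm q.1 p.1, abs_sub_comm q.2 p.2]
  exact h

lemma gridAdj_irrefl (p : ℤ × ℤ) : ¬ gridAdj p p := by simp [gridAdj]

/-- The graph induced on a set `X` of grid positions. -/
def gridGraph (X : Set (ℤ × ℤ)) : SimpleGraph (ℤ × ℤ) where
  Adj p q := p ∈ X ∧ q ∈ X ∧ gridAdj p q
  symm := ⟨fun p q h => ⟨h.2.1, h.1, gridAdj_symm h.2.2⟩⟩
  loopless := ⟨fun p h => gridAdj_irrefl p h.2.2⟩

/-- Graph distance inside the set `X`. -/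
noncomputable def gdist (X : Set (ℤ × ℤ)) (p q : ℤ × ℤ) : ℕ := (gridGraph X).dist p q

/-- The boundary condition of `p` in `X`: it records which of the four
neighbors of `p` lie in `X`. -/
def bcond (X : Set (ℤ × ℤ)) (p : ℤ × ℤ) : Set (ℤ × ℤ) := {q ∈ X | gridAdj p q}

/-- The set `M(v, t, X)` of nodes `w` with `d(v_gen, w) + d(w, v) ≤ t`. -/
noncomputable def Mset (v : ℤ × ℤ) (t : ℕ) (X : Set (ℤ × ℤ)) : Set (ℤ × ℤ) :=
  {w ∈ X | gdist X (0, 0) w + gdist X w v ≤ t}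

/-- The available information (local map) `ai(v, t, X)`; `none` plays the role of `Q`. -/
noncomputable def ai (v : ℤ × ℤ) (t : ℕ) (X : Set (ℤ × ℤ)) :
    Option (ℕ × (ℤ × ℤ) × Set ((ℤ × ℤ) × Set (ℤ × ℤ))) :=
  if v ∈ X ∧ (gridGraph X).Reachable (0, 0) v ∧ gdist X (0, 0) v ≤ t then
    some (t, v, (fun w => (w, bcond X w)) '' Mset v t X)
  else none

/-- `X ≡'_{t,v} Y` : `v ∈ X ∩ Y` and `ai(v,t,X) = ai(v,t,Y) ≠ Q`. -/
def equivAt (t : ℕ) (v : ℤ × ℤ) (X Y : Set (ℤ × ℤ)) : Prop :=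
  v ∈ X ∧ v ∈ Y ∧ ai v t X = ai v t Y ∧ ai v t X ≠ none

/-- A configuration: a finite connected set of positions containing the origin. -/
def IsConfig (X : Set (ℤ × ℤ)) : Prop :=
  X.Finite ∧ (0, 0) ∈ X ∧ ∀ p ∈ X, ∀ q ∈ X, (gridGraph X).Reachable p q

/-- `Y` is a consistent extension of the subset `M` of `X`. -/
def ConsExt (X M Y : Set (ℤ × ℤ)) : Prop := M ⊆ Y ∧ ∀ w ∈ M, bcond X w = bcond Y w

/-- `X` is convex: every shortest grid path between two of its elements lies in `X`. -/
def GridConvex (X : Set (ℤ × ℤ)) : Prop :=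
  ∀ p ∈ X, ∀ q ∈ X, ∀ l : List (ℤ × ℤ),
    l.head? = some p → l.getLast? = some q → l.Chain' gridAdj →
    (l.length : ℤ) = |p.1 - q.1| + |p.2 - q.2| + 1 → ∀ x ∈ l, x ∈ X

/-! In a convex set the graph distance is the L1 distance, since a shortest grid path between two
of its points never leaves it. Hence `M(v, t, C)` is described by L1 distances alone, and if `C'`
extends `M(v, t, C)` consistently, then `M(v, t, C') ⊆ C`: walking from a point of `M(v, t, C')`
back to the origin along a shortest path in `C'`, each step stays in `M(v, t, C)` by induction, and
the next point is a neighbour of it, which `C'` and `C` agree about. -/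

def l1Dist (p q : ℤ × ℤ) : ℕ := (p.1 - q.1).natAbs + (p.2 - q.2).natAbs

lemma l1Dist_comm (p q : ℤ × ℤ) : l1Dist p q = l1Dist q p := by
  unfold l1Dist; omega

lemma l1Dist_triangle (p q r : ℤ × ℤ) : l1Dist p r ≤ l1Dist p q + l1Dist q r := by
  unfold l1Dist; omega

@[simp]
lemma l1Dist_self (p : ℤ × ℤ) : l1Dist p p = 0 := by simp [l1Dist]

lemma natCast_l1Dist (p q : ℤ × ℤ) : (l1Dist p q : ℤ) = |p.1 - q.1| + |p.2 - q.2| := by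
  simp [l1Dist]

lemma l1Dist_eq_zero {p q : ℤ × ℤ} : l1Dist p q = 0 ↔ p = q := by
  unfold l1Dist; constructor
  · intro h; ext <;> omega
  · rintro rfl; simp

lemma gridAdj_iff_l1Dist_eq_one {p q : ℤ × ℤ} : gridAdj p q ↔ l1Dist p q = 1 := by
  rw [gridAdj, l1Dist, ← Int.natCast_natAbs, ← Int.natCast_natAbs]; omega

lemma exists_gridAdj_l1Dist_succ {p q : ℤ × ℤ} (hpq : p ≠ q) :
    ∃ u, gridAdj p u ∧ l1Dist u q + 1 = l1Dist p q := by
  simp only [gridAdj_iff_l1Dist_eq_one, l1Dist]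
  rcases lt_trichotomy p.1 q.1 with h | h | h
  · exact ⟨(p.1 + 1, p.2), by omega, by omega⟩
  · have : p.2 ≠ q.2 := fun h' => hpq (Prod.ext h h')
    rcases this.lt_or_gt with h' | h'
    · exact ⟨(p.1, p.2 + 1), by omega, by omega⟩
    · exact ⟨(p.1, p.2 - 1), by omega, by omega⟩
  · exact ⟨(p.1 - 1, p.2), by omega, by omega⟩

lemma exists_geodesic_list (p q : ℤ × ℤ) : ∃ l : List (ℤ × ℤ), l.head? = some p ∧
    l.getLast? = some q ∧ l.IsChain gridAdj ∧ l.length = l1Dist p q + 1 := by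
  induction hn : l1Dist p q generalizing p with
  | zero => exact ⟨[p], rfl, by rw [l1Dist_eq_zero.mp hn]; rfl, List.isChain_singleton p, rfl⟩
  | succ n ih =>
    obtain ⟨u, hpu, hu⟩ := exists_gridAdj_l1Dist_succ (p := p) (q := q) (by rintro rfl; simp at hn)
    obtain ⟨l, hhead, hlast, hchain, hlen⟩ := ih u (by omega)
    refine ⟨p :: l, rfl, ?_, hchain.cons (by simpa [hhead]), by simp [hlen]⟩
    rw [List.getLast?_cons, hlast]; rfl

lemma l1Dist_le_length {X : Set (ℤ × ℤ)} {p q : ℤ × ℤ} (w : (gridGraph X).Walk p q) :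
    l1Dist p q ≤ w.length := by
  induction w with
  | nil => simp
  | @cons a b c h w ih =>
    have := l1Dist_triangle a b c
    rw [gridAdj_iff_l1Dist_eq_one.mp h.2.2] at this
    simp only [SimpleGraph.Walk.length_cons]; omega

lemma mem_Mset_self {X : Set (ℤ × ℤ)} {v : ℤ × ℤ} {t : ℕ} (hv : v ∈ X)
    (ht : gdist X (0, 0) v ≤ t) : v ∈ Mset v t X :=
  ⟨hv, by simpa [gdist, SimpleGraph.dist_self] using ht⟩

lemma image_prodMk_eq_iff {α β : Type*} {F G : α → β} {A B : Set α} :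
    (fun a => (a, F a)) '' A = (fun a => (a, G a)) '' B ↔ A = B ∧ ∀ a ∈ A, F a = G a := by
  constructor
  · intro h
    have hAB : A = B := by
      simpa only [Set.image_image, Set.image_id'] using congrArg (Prod.fst '' ·) h
    refine ⟨hAB, fun a ha => ?_⟩
    obtain ⟨b, -, hb⟩ := h ▸ Set.mem_image_of_mem (fun a => (a, F a)) ha
    simp only [Prod.mk.injEq] at hb
    rw [← hb.2, hb.1]
  · rintro ⟨rfl, hFG⟩
    exact Set.image_congr fun a ha => by rw [hFG a ha]

namespace GridConvex

variable {X Y : Set (ℤ × ℤ)} {p q v : ℤ × ℤ} {t : ℕ}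

lemma exists_gridAdj_mem (hX : GridConvex X) (hp : p ∈ X) (hq : q ∈ X) (hpq : p ≠ q) :
    ∃ u ∈ X, gridAdj p u ∧ l1Dist u q + 1 = l1Dist p q := by
  obtain ⟨u, hpu, hu⟩ := exists_gridAdj_l1Dist_succ hpq
  obtain ⟨l, hhead, hlast, hchain, hlen⟩ := exists_geodesic_list u q
  refine ⟨u, hX p hp q hq (p :: l) rfl ?_ (hchain.cons (by simpa [hhead])) ?_ u ?_, hpu, hu⟩
  · rw [List.getLast?_cons, hlast]; rfl
  · rw [List.length_cons, hlen, ← natCast_l1Dist, ← hu]; push_cast; ring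
  · exact List.mem_cons_of_mem p (List.mem_of_mem_head? hhead)

lemma exists_walk_length_eq_l1Dist (hX : GridConvex X) (hp : p ∈ X) (hq : q ∈ X) :
    ∃ w : (gridGraph X).Walk p q, w.length = l1Dist p q := by
  induction hn : l1Dist p q generalizing p with
  | zero => rw [l1Dist_eq_zero.mp hn]; exact ⟨.nil, rfl⟩
  | succ n ih =>
    obtain ⟨u, huX, hpu, hu⟩ := hX.exists_gridAdj_mem hp hq (by rintro rfl; simp at hn)
    obtain ⟨w, hw⟩ := ih huX (by omega)
    exact ⟨.cons (show (gridGraph X).Adj p u from ⟨hp, huX, hpu⟩) w, by simp [hw]⟩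

lemma reachable (hX : GridConvex X) (hp : p ∈ X) (hq : q ∈ X) :
    (gridGraph X).Reachable p q :=
  let ⟨w, _⟩ := hX.exists_walk_length_eq_l1Dist hp hq; ⟨w⟩

lemma gdist_eq_l1Dist (hX : GridConvex X) (hp : p ∈ X) (hq : q ∈ X) :
    gdist X p q = l1Dist p q := by
  obtain ⟨w, hw⟩ := hX.exists_walk_length_eq_l1Dist hp hq
  obtain ⟨w', hw'⟩ := (hX.reachable hp hq).exists_walk_length_eq_dist
  have := l1Dist_le_length w'
  have := SimpleGraph.dist_le w
  unfold gdist; omega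

lemma Mset_eq (hX : GridConvex X) (h0 : (0, 0) ∈ X) (hv : v ∈ X) :
    Mset v t X = {w ∈ X | l1Dist (0, 0) w + l1Dist w v ≤ t} := by
  ext w
  refine and_congr_right fun hw => ?_
  rw [hX.gdist_eq_l1Dist h0 hw, hX.gdist_eq_l1Dist hw hv]

lemma ai_eq_some (hX : GridConvex X) (h0 : (0, 0) ∈ X) (hv : v ∈ X)
    (ht : l1Dist (0, 0) v ≤ t) :
    ai v t X = some (t, v, (fun w => (w, bcond X w)) '' Mset v t X) :=
  if_pos ⟨hv, hX.reachable h0 hv, hX.gdist_eq_l1Dist h0 hv ▸ ht⟩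

lemma equivAt_iff (hX : GridConvex X) (hY : GridConvex Y) (h0X : (0, 0) ∈ X)
    (h0Y : (0, 0) ∈ Y) (hv : v ∈ X) (ht : l1Dist (0, 0) v ≤ t) :
    equivAt t v X Y ↔
      v ∈ Y ∧ Mset v t X = Mset v t Y ∧ ∀ w ∈ Mset v t X, bcond X w = bcond Y w := by
  simp only [equivAt, hv, true_and]
  refine and_congr_right fun hvY => ?_
  rw [hX.ai_eq_some h0X hv ht, hY.ai_eq_some h0Y hvY ht]
  simp only [Option.some.injEq, Prod.mk.injEq, true_and, ne_eq, reduceCtorEq,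
    not_false_eq_true, and_true, image_prodMk_eq_iff]

lemma mem_of_consExt (hX : GridConvex X) (hY : GridConvex Y) (h0X : (0, 0) ∈ X)
    (h0Y : (0, 0) ∈ Y) (hv : v ∈ X) (hext : ConsExt X (Mset v t X) Y) {w : ℤ × ℤ}
    (hw : w ∈ Y) (hwt : l1Dist (0, 0) w + l1Dist w v ≤ t) : w ∈ X := by
  induction hn : l1Dist (0, 0) w generalizing w with
  | zero => rwa [← l1Dist_eq_zero.mp hn]
  | succ n ih =>
    obtain ⟨u, huY, hwu, hu⟩ := hY.exists_gridAdj_mem hw h0Y (by rintro rfl; simp at hn)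
    rw [l1Dist_comm u, l1Dist_comm w] at hu
    have huv := l1Dist_triangle u w v
    rw [gridAdj_iff_l1Dist_eq_one.mp (gridAdj_symm hwu)] at huv
    have huX : u ∈ X := ih huY (by omega) (by omega)
    have huM : u ∈ Mset v t X := by
      rw [hX.Mset_eq h0X hv]; exact ⟨huX, by omega⟩
    have hwbc : w ∈ bcond Y u := ⟨hw, gridAdj_symm hwu⟩
    rw [← hext.2 u huM] at hwbc
    exact hwbc.1

lemma Mset_eq_of_consExt (hX : GridConvex X) (hY : GridConvex Y) (h0X : (0, 0) ∈ X)
    (h0Y : (0, 0) ∈ Y) (hv : v ∈ X) (ht : l1Dist (0, 0) v ≤ t)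
    (hext : ConsExt X (Mset v t X) Y) : Mset v t X = Mset v t Y := by
  have hvY : v ∈ Y :=
    hext.1 (mem_Mset_self hv ((hX.gdist_eq_l1Dist h0X hv).trans_le ht))
  rw [hX.Mset_eq h0X hv, hY.Mset_eq h0Y hvY]
  ext w
  refine ⟨fun hw => ⟨hext.1 ?_, hw.2⟩, fun hw => ⟨?_, hw.2⟩⟩
  · rw [hX.Mset_eq h0X hv]; exact hw
  · exact hX.mem_of_consExt hY h0X h0Y hv hext hw.1 hw.2

end GridConvex

theorem stmt3 (C C' : Set (ℤ × ℤ)) (hC : IsConfig C) (hC' : IsConfig C')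
    (hconv : GridConvex C) (hconv' : GridConvex C')
    (v : ℤ × ℤ) (hv : v ∈ C) (t : ℕ) (ht : gdist C (0, 0) v ≤ t) :
    equivAt t v C C' ↔ ConsExt C (Mset v t C) C' := by
  have hvt : l1Dist (0, 0) v ≤ t := hconv.gdist_eq_l1Dist hC.2.1 hv ▸ ht
  rw [hconv.equivAt_iff hconv' hC.2.1 hC'.2.1 hv hvt]
  constructor
  · rintro ⟨-, hM, hbc⟩
    exact ⟨hM ▸ fun w hw => hw.1, hbc⟩
  · intro hext
    exact ⟨hext.1 (mem_Mset_self hv ht),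
      hconv.Mset_eq_of_consExt hconv' hC.2.1 hC'.2.1 hv hvt hext, hext.2⟩
end

section
/- If a configuration C = p_r … p_s of g-2PATH is of Type I (both hands free), then mft_{g-2PATH}(C) = −r + s + max{−r, s}. -/
/-!
At time `t` the cell `p_m` knows exactly the cells `p_k` with `|k| + |k - m| ≤ t`, together with
their boundary conditions. Once `t ≥ -r + s + max (-r) s` every cell sees the whole path, so every
configuration indistinguishable from `C` is `C` itself, whose radius `max (-r) s` does not exceed
`t`: such `t` is unsafe. Conversely, if the right hand is free, `p_r … p_{s-1}` has consistent
right extensions of every length, and nothing can then be added on the left, since both new ends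
would have to be the missing cell `p_s`. For `t < -r + 2s` the cell `p_m`, `m = max r (-t)`, does
not see `p_s`, so it cannot tell `C` from such an extension of radius larger than `t`.
Symmetrically a free left hand makes every `t < -2r + s` safe, using `m = min s t`; and
`-r + s + max (-r) s = max (-2r + s) (-r + 2s)`.
-/

open scoped Classical

/-- `p` restricted to the index interval `[r, s]` is a simple, non-self-touching
lattice path through the origin `p 0 = (0,0)` (a g-2PATH configuration). -/
def IsPathOn (p : ℤ → ℤ × ℤ) (r s : ℤ) : Prop :=
  r ≤ 0 ∧ 0 ≤ s ∧ p 0 = (0, 0) ∧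
    (∀ m, r ≤ m → m < s → gridAdj (p m) (p (m + 1))) ∧
    (∀ m n, r ≤ m → m ≤ s → r ≤ n → n ≤ s → p m = p n → m = n) ∧
    (∀ m n, r ≤ m → m + 2 ≤ n → n ≤ s → ¬ gridAdj (p m) (p n))

/-- A configuration of g-2PATH. -/
structure GPath2 where
  r : ℤ
  s : ℤ
  p : ℤ → ℤ × ℤ
  isPath : IsPathOn p r s

/-- The set of positions of the path. -/
def pathSet (C : GPath2) : Set (ℤ × ℤ) := C.p '' Set.Icc C.r C.s

/-- The path obtained from the sub-path `p_i … p_j` of `C` by appending the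
sequence `x0` on the left and `x1` on the right. -/
def extFun (C : GPath2) (i j : ℤ) (x0 x1 : List (ℤ × ℤ)) : ℤ → ℤ × ℤ := fun m =>
  if m < i then x0.getD (m - (i - x0.length)).toNat (0, 0)
  else if m ≤ j then C.p m
  else x1.getD (m - (j + 1)).toNat (0, 0)

/-- `(x0, x1)` is a pair of sequences of positions such that `x0 p_i … p_j x1`
is a configuration of g-2PATH that is a consistent extension of the sub-path
`p_i … p_j` of `C` (boundary conditions of `p_i … p_j` are preserved). -/
def IsExtPair (C : GPath2) (i j : ℤ) (x0 x1 : List (ℤ × ℤ)) : Prop :=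
  C.r ≤ i ∧ i ≤ 0 ∧ 0 ≤ j ∧ j ≤ C.s ∧
    IsPathOn (extFun C i j x0 x1) (i - x0.length) (j + x1.length) ∧
    ∀ m, i ≤ m → m ≤ j →
      bcond (pathSet C) (C.p m) =
        bcond (extFun C i j x0 x1 '' Set.Icc (i - (x0.length : ℤ)) (j + (x1.length : ℤ)))
          (C.p m)

def Wset (C : GPath2) (i j : ℤ) : Set (List (ℤ × ℤ) × List (ℤ × ℤ)) :=
  {w | IsExtPair C i j w.1 w.2}

def Uset (C : GPath2) (i j : ℤ) : Set (List (ℤ × ℤ)) := Prod.fst '' Wset C i j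

def Vset (C : GPath2) (i j : ℤ) : Set (List (ℤ × ℤ)) := Prod.snd '' Wset C i j

/-- `f(i,j)`: the supremum of lengths of consistent left extensions. -/
noncomputable def fval (C : GPath2) (i j : ℤ) : ENat := ⨆ x ∈ Uset C i j, (x.length : ENat)

/-- `g(i,j)`: the supremum of lengths of consistent right extensions. -/
noncomputable def gval (C : GPath2) (i j : ℤ) : ENat := ⨆ x ∈ Vset C i j, (x.length : ENat)

/-- `NI(i,j)` : `W(i,j) = U(i,j) × V(i,j)`. -/
def NI (C : GPath2) (i j : ℤ) : Prop := Wset C i j = Uset C i j ×ˢ Vset C i j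

def Kset (C : GPath2) : Set (ℤ × ℤ) :=
  {ij | C.r ≤ ij.1 ∧ ij.1 ≤ 0 ∧ 0 ≤ ij.2 ∧ ij.2 ≤ C.s ∧ (Wset C ij.1 ij.2).Finite}

def Iset (C : GPath2) : Set (ℤ × ℤ) :=
  {ij | C.r ≤ ij.1 - 1 ∧ ij.1 ≤ 0 ∧ 0 ≤ ij.2 ∧ ij.2 ≤ C.s ∧
    (Wset C ij.1 ij.2).Infinite ∧ (Wset C (ij.1 - 1) ij.2).Finite}

def Jset (C : GPath2) : Set (ℤ × ℤ) :=
  {ij | C.r ≤ ij.1 ∧ ij.1 ≤ 0 ∧ 0 ≤ ij.2 ∧ ij.2 + 1 ≤ C.s ∧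
    (Wset C ij.1 ij.2).Infinite ∧ (Wset C ij.1 (ij.2 + 1)).Finite}

/-- The condition of noninterference of extensions. -/
def CNI (C : GPath2) : Prop := ∀ ij ∈ Kset C ∪ Iset C ∪ Jset C, NI C ij.1 ij.2

/-- The radius of `X`: the largest distance from the origin within `X`. -/
noncomputable def rad (X : Set (ℤ × ℤ)) : ℕ := sSup {n | ∃ v ∈ X, gdist X (0, 0) v = n}

def EquivStep (t : ℕ) (C C' : GPath2) : Prop := ∃ v, equivAt t v (pathSet C) (pathSet C')

/-- `t` is safe for `C`: some chain `C ≡'_t C₁ ≡'_t … ≡'_t C'` ends in a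
configuration of radius `> t`. -/
def Safe (t : ℕ) (C : GPath2) : Prop :=
  ∃ C' : GPath2, Relation.ReflTransGen (EquivStep t) C C' ∧ t < rad (pathSet C')

/-- The minimum firing time of `C` for g-2PATH: the least unsafe time. -/
noncomputable def mft (C : GPath2) : ℕ := sInf {t | ¬ Safe t C}

/-- `T̃ = min_{r ≤ i ≤ 0 ≤ j ≤ s} max {−2i + j + g(i,j), 2j − i + f(i,j)}`. -/
noncomputable def Ttilde (C : GPath2) : ENat :=
  sInf {x : ENat | ∃ i j : ℤ, C.r ≤ i ∧ i ≤ 0 ∧ 0 ≤ j ∧ j ≤ C.s ∧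
    x = max (((-2 * i + j).toNat : ENat) + gval C i j)
            (((2 * j - i).toNat : ENat) + fval C i j)}

/-- The left hand `p_r … p_0` of `C` is free. -/
def FreeLeft (C : GPath2) : Prop := C.r = 0 ∨ (C.r < 0 ∧ fval C (C.r + 1) C.s = ⊤)

/-- The right hand `p_0 … p_s` of `C` is free. -/
def FreeRight (C : GPath2) : Prop := C.s = 0 ∨ (0 < C.s ∧ gval C C.r (C.s - 1) = ⊤)

namespace GPath2

variable (D : GPath2)

lemma r_nonpos : D.r ≤ 0 := D.isPath.1

lemma s_nonneg : 0 ≤ D.s := D.isPath.2.1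

lemma p_zero : D.p 0 = (0, 0) := D.isPath.2.2.1

lemma gridAdj_succ {m : ℤ} (h1 : D.r ≤ m) (h2 : m < D.s) : gridAdj (D.p m) (D.p (m + 1)) :=
  D.isPath.2.2.2.1 m h1 h2

lemma eq_of_p_eq {m n : ℤ} (hm1 : D.r ≤ m) (hm2 : m ≤ D.s) (hn1 : D.r ≤ n) (hn2 : n ≤ D.s)
    (h : D.p m = D.p n) : m = n :=
  D.isPath.2.2.2.2.1 m n hm1 hm2 hn1 hn2 h

lemma p_mem_pathSet {k : ℤ} (h1 : D.r ≤ k) (h2 : k ≤ D.s) : D.p k ∈ pathSet D :=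
  ⟨k, ⟨h1, h2⟩, rfl⟩

lemma origin_mem_pathSet : (0, 0) ∈ pathSet D :=
  D.p_zero ▸ D.p_mem_pathSet D.r_nonpos D.s_nonneg

variable {D}

lemma natAbs_sub_le_one_of_gridAdj {a b : ℤ} (ha1 : D.r ≤ a) (ha2 : a ≤ D.s)
    (hb1 : D.r ≤ b) (hb2 : b ≤ D.s) (h : gridAdj (D.p a) (D.p b)) : (a - b).natAbs ≤ 1 := by
  have hnt := D.isPath.2.2.2.2.2
  rcases lt_trichotomy a b with hab | rfl | hab
  · have : ¬ a + 2 ≤ b := fun h2 => hnt a b ha1 h2 hb2 h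
    omega
  · exact absurd h (gridAdj_irrefl _)
  · have : ¬ b + 2 ≤ a := fun h2 => hnt b a hb1 h2 ha2 (gridAdj_symm h)
    omega

lemma natAbs_sub_le_length {u v : ℤ × ℤ} (W : (gridGraph (pathSet D)).Walk u v) {a b : ℤ}
    (ha1 : D.r ≤ a) (ha2 : a ≤ D.s) (hb1 : D.r ≤ b) (hb2 : b ≤ D.s)
    (hu : D.p a = u) (hv : D.p b = v) : (a - b).natAbs ≤ W.length := by
  induction W generalizing a with
  | nil =>
    have := D.eq_of_p_eq ha1 ha2 hb1 hb2 (hu.trans hv.symm)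
    omega
  | cons h W ih =>
    rw [SimpleGraph.Walk.length_cons]
    obtain ⟨-, ⟨c, ⟨hc1, hc2⟩, rfl⟩, hadj⟩ := h
    have hac := natAbs_sub_le_one_of_gridAdj ha1 ha2 hc1 hc2 (hu ▸ hadj)
    have hcb := ih hc1 hc2 rfl hv
    omega

lemma exists_walk_length_eq {a b : ℤ} (ha : D.r ≤ a) (hab : a ≤ b) (hb : b ≤ D.s) :
    ∃ W : (gridGraph (pathSet D)).Walk (D.p a) (D.p b), W.length = (b - a).toNat := by
  induction b, hab using Int.leInduction with
  | base => exact ⟨.nil, by simp⟩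
  | succ b hab ih =>
    obtain ⟨W, hW⟩ := ih (by omega)
    have hadj : (gridGraph (pathSet D)).Adj (D.p b) (D.p (b + 1)) :=
      ⟨D.p_mem_pathSet (by omega) (by omega), D.p_mem_pathSet (by omega) hb,
        D.gridAdj_succ (by omega) (by omega)⟩
    exact ⟨W.concat hadj, by rw [SimpleGraph.Walk.length_concat, hW]; omega⟩

lemma reachable_p {a b : ℤ} (ha1 : D.r ≤ a) (ha2 : a ≤ D.s) (hb1 : D.r ≤ b)
    (hb2 : b ≤ D.s) :
    (gridGraph (pathSet D)).Reachable (D.p a) (D.p b) := by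
  rcases le_total a b with hab | hab
  · exact (exists_walk_length_eq ha1 hab hb2).elim fun W _ => W.reachable
  · exact ((exists_walk_length_eq hb1 hab ha2).elim fun W _ => W.reachable).symm

lemma gdist_p {a b : ℤ} (ha1 : D.r ≤ a) (ha2 : a ≤ D.s) (hb1 : D.r ≤ b) (hb2 : b ≤ D.s) :
    gdist (pathSet D) (D.p a) (D.p b) = (a - b).natAbs := by
  have hle : ∀ {a b : ℤ}, D.r ≤ a → a ≤ b → b ≤ D.s →
      gdist (pathSet D) (D.p a) (D.p b) ≤ (a - b).natAbs := fun ha hab hb => by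
    obtain ⟨W, hW⟩ := exists_walk_length_eq ha hab hb
    have := SimpleGraph.dist_le W
    rw [gdist]
    omega
  refine le_antisymm ?_ ?_
  · rcases le_total a b with hab | hab
    · exact hle ha1 hab hb2
    · rw [gdist, SimpleGraph.dist_comm]
      exact (hle hb1 hab ha2).trans (by omega)
  · obtain ⟨W, hW⟩ := (reachable_p ha1 ha2 hb1 hb2).exists_walk_length_eq_dist
    rw [gdist, ← hW]
    exact natAbs_sub_le_length W ha1 ha2 hb1 hb2 rfl rfl

lemma reachable_origin {k : ℤ} (h1 : D.r ≤ k) (h2 : k ≤ D.s) :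
    (gridGraph (pathSet D)).Reachable (0, 0) (D.p k) :=
  D.p_zero ▸ reachable_p D.r_nonpos D.s_nonneg h1 h2

lemma gdist_origin {k : ℤ} (h1 : D.r ≤ k) (h2 : k ≤ D.s) :
    gdist (pathSet D) (0, 0) (D.p k) = k.natAbs := by
  rw [← D.p_zero, gdist_p D.r_nonpos D.s_nonneg h1 h2, zero_sub, Int.natAbs_neg]

variable (D) in
def MsetIdx (m : ℤ) (t : ℕ) : Set ℤ :=
  {k | D.r ≤ k ∧ k ≤ D.s ∧ k.natAbs + (k - m).natAbs ≤ t}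

@[simp] lemma mem_MsetIdx {m k : ℤ} {t : ℕ} :
    k ∈ D.MsetIdx m t ↔ D.r ≤ k ∧ k ≤ D.s ∧ k.natAbs + (k - m).natAbs ≤ t := Iff.rfl

lemma Mset_eq {m : ℤ} (hm1 : D.r ≤ m) (hm2 : m ≤ D.s) (t : ℕ) :
    Mset (D.p m) t (pathSet D) = D.p '' D.MsetIdx m t := by
  ext x
  constructor
  · rintro ⟨⟨k, ⟨hk1, hk2⟩, rfl⟩, hd⟩
    rw [gdist_origin hk1 hk2, gdist_p hk1 hk2 hm1 hm2] at hd
    exact ⟨k, ⟨hk1, hk2, hd⟩, rfl⟩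
  · rintro ⟨k, ⟨hk1, hk2, hd⟩, rfl⟩
    refine ⟨D.p_mem_pathSet hk1 hk2, ?_⟩
    rwa [gdist_origin hk1 hk2, gdist_p hk1 hk2 hm1 hm2]

lemma ai_eq {m : ℤ} {t : ℕ} (hm : m ∈ D.MsetIdx m t) :
    ai (D.p m) t (pathSet D) =
      some (t, D.p m, (fun k => (D.p k, bcond (pathSet D) (D.p k))) '' D.MsetIdx m t) := by
  obtain ⟨hm1, hm2, hmt⟩ := hm
  have hcond : D.p m ∈ pathSet D ∧ (gridGraph (pathSet D)).Reachable (0, 0) (D.p m) ∧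
      gdist (pathSet D) (0, 0) (D.p m) ≤ t :=
    ⟨D.p_mem_pathSet hm1 hm2, reachable_origin hm1 hm2, by rw [gdist_origin hm1 hm2]; omega⟩
  rw [ai, if_pos hcond, Mset_eq hm1 hm2, Set.image_image]

variable (D) in
lemma rad_pathSet : rad (pathSet D) = (max (-D.r) D.s).toNat := by
  have hr := D.r_nonpos
  have hs := D.s_nonneg
  set R := {n | ∃ v ∈ pathSet D, gdist (pathSet D) (0, 0) v = n}
  have hub : ∀ n ∈ R, n ≤ (max (-D.r) D.s).toNat := by
    rintro n ⟨-, ⟨k, ⟨hk1, hk2⟩, rfl⟩, rfl⟩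
    rw [gdist_origin hk1 hk2]
    omega
  have hmem : (max (-D.r) D.s).toNat ∈ R := by
    rcases le_total (-D.r) D.s with h | h
    · refine ⟨D.p D.s, D.p_mem_pathSet (by omega) le_rfl, ?_⟩
      rw [gdist_origin (by omega) le_rfl]
      omega
    · refine ⟨D.p D.r, D.p_mem_pathSet le_rfl (by omega), ?_⟩
      rw [gdist_origin le_rfl (by omega)]
      omega
  exact le_antisymm (csSup_le ⟨_, hmem⟩ hub) (le_csSup ⟨_, hub⟩ hmem)

end GPath2

lemma eq_and_eqOn_of_image_graph_eq {α β : Type*} {f g : α → β} {s t : Set α}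
    (h : (fun a => (a, f a)) '' s = (fun a => (a, g a)) '' t) : s = t ∧ Set.EqOn f g s := by
  refine ⟨by simpa [Set.image_image] using congrArg (Prod.fst '' ·) h, fun a ha => ?_⟩
  obtain ⟨b, -, hb⟩ := h ▸ Set.mem_image_of_mem (fun a => (a, f a)) ha
  simp only [Prod.mk.injEq] at hb
  exact hb.1 ▸ hb.2.symm

lemma subset_of_bcond_eq {X Y : Set (ℤ × ℤ)} (h0 : (0, 0) ∈ X)
    (hbc : ∀ w ∈ X, bcond Y w = bcond X w)
    (hY : ∀ y ∈ Y, (gridGraph Y).Reachable (0, 0) y) : Y ⊆ X := by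
  intro y hy
  have hreach := (SimpleGraph.reachable_iff_reflTransGen _ _).1 (hY y hy)
  clear hy
  induction hreach with
  | refl => exact h0
  | tail _ hadj ih =>
    have : _ ∈ bcond Y _ := ⟨hadj.2.1, hadj.2.2⟩
    exact (hbc _ ih ▸ this).1

lemma eq_of_equivAt {X Y : Set (ℤ × ℤ)} {t : ℕ} {v : ℤ × ℤ} (h : equivAt t v X Y)
    (h0 : (0, 0) ∈ X) (hfull : ∀ w ∈ X, gdist X (0, 0) w + gdist X w v ≤ t)
    (hY : ∀ y ∈ Y, (gridGraph Y).Reachable (0, 0) y) : Y = X := by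
  obtain ⟨-, -, hai, hne⟩ := h
  have hcondX : v ∈ X ∧ (gridGraph X).Reachable (0, 0) v ∧ gdist X (0, 0) v ≤ t := by
    by_contra hc
    exact hne (by rw [ai, if_neg hc])
  have hcondY : v ∈ Y ∧ (gridGraph Y).Reachable (0, 0) v ∧ gdist Y (0, 0) v ≤ t := by
    by_contra hc
    rw [ai, ai, if_pos hcondX, if_neg hc] at hai
    exact Option.some_ne_none _ hai
  rw [ai, ai, if_pos hcondX, if_pos hcondY] at hai
  obtain ⟨hM, hbc⟩ := eq_and_eqOn_of_image_graph_eq (congrArg (·.2.2) (Option.some_inj.1 hai))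
  have hMX : Mset v t X = X := Set.sep_eq_self_iff_mem_true.2 hfull
  rw [hMX] at hM hbc
  exact (subset_of_bcond_eq h0 (fun w hw => (hbc hw).symm) hY).antisymm
    (hM ▸ Set.sep_subset _ _)

lemma not_safe_of_le (C : GPath2) {t : ℕ} (ht : -C.r + C.s + max (-C.r) C.s ≤ t) :
    ¬ Safe t C := by
  have hr := C.r_nonpos
  have hs := C.s_nonneg
  have hchain : ∀ D, Relation.ReflTransGen (EquivStep t) C D → pathSet D = pathSet C := by
    intro D hCD
    induction hCD with
    | refl => rfl
    | tail _ hstep ih =>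
      obtain ⟨v, hv⟩ := hstep
      rw [ih] at hv
      obtain ⟨m, ⟨hm1, hm2⟩, rfl⟩ := hv.1
      refine eq_of_equivAt hv C.origin_mem_pathSet ?_ ?_
      · rintro _ ⟨k, ⟨hk1, hk2⟩, rfl⟩
        rw [GPath2.gdist_origin hk1 hk2, GPath2.gdist_p hk1 hk2 hm1 hm2]
        omega
      · rintro _ ⟨k, ⟨hk1, hk2⟩, rfl⟩
        exact GPath2.reachable_origin hk1 hk2
  rintro ⟨D, hCD, hrad⟩
  rw [hchain D hCD, GPath2.rad_pathSet] at hrad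
  omega

lemma safe_of_agree {C D : GPath2} {m : ℤ} {t : ℕ} (hm : m ∈ C.MsetIdx m t)
    (hidx : C.MsetIdx m t = D.MsetIdx m t) (hp : ∀ k ∈ C.MsetIdx m t, D.p k = C.p k)
    (hbc : ∀ k ∈ C.MsetIdx m t, bcond (pathSet D) (C.p k) = bcond (pathSet C) (C.p k))
    (hrad : t < rad (pathSet D)) : Safe t C := by
  have haiC := C.ai_eq hm
  have haiD := D.ai_eq (hidx ▸ hm)
  rw [hp m hm] at haiD
  have himg : (fun k => (D.p k, bcond (pathSet D) (D.p k))) '' D.MsetIdx m t =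
      (fun k => (C.p k, bcond (pathSet C) (C.p k))) '' C.MsetIdx m t := by
    rw [← hidx]
    exact Set.image_congr fun k hk => by rw [hp k hk, hbc k hk]
  refine ⟨D, .single ⟨C.p m, C.p_mem_pathSet hm.1 hm.2.1, ?_, ?_, ?_⟩, hrad⟩
  · exact hp m hm ▸ D.p_mem_pathSet (hidx ▸ hm).1 (hidx ▸ hm).2.1
  · rw [haiC, haiD, himg]
  · rw [haiC]
    exact Option.some_ne_none _

namespace IsExtPair

variable {C : GPath2} {i j : ℤ} {x0 x1 : List (ℤ × ℤ)}

def toGPath2 (hx : IsExtPair C i j x0 x1) : GPath2 :=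
  ⟨i - x0.length, j + x1.length, extFun C i j x0 x1, hx.2.2.2.2.1⟩

variable (hx : IsExtPair C i j x0 x1)
include hx

@[simp] lemma toGPath2_r : hx.toGPath2.r = i - x0.length := rfl

@[simp] lemma toGPath2_s : hx.toGPath2.s = j + x1.length := rfl

lemma toGPath2_p {k : ℤ} (h1 : i ≤ k) (h2 : k ≤ j) : hx.toGPath2.p k = C.p k := by
  simp only [toGPath2, extFun, if_neg (not_lt.2 h1), if_pos h2]

lemma bcond_toGPath2 {k : ℤ} (h1 : i ≤ k) (h2 : k ≤ j) :
    bcond (pathSet hx.toGPath2) (C.p k) = bcond (pathSet C) (C.p k) :=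
  (hx.2.2.2.2.2 k h1 h2).symm

/-- Boundary conditions on `p_i … p_j` are preserved, so a new cell touching it is an old cell. -/
lemma exists_eq_p_of_gridAdj {m n : ℤ} (hm1 : i ≤ m) (hm2 : m ≤ j)
    (hn1 : hx.toGPath2.r ≤ n) (hn2 : n ≤ hx.toGPath2.s) (hn : n < i ∨ j < n)
    (hadj : gridAdj (C.p m) (hx.toGPath2.p n)) :
    ∃ k, C.r ≤ k ∧ k ≤ C.s ∧ (k < i ∨ j < k) ∧ hx.toGPath2.p n = C.p k := by
  have hq : hx.toGPath2.p n ∈ bcond (pathSet C) (C.p m) := by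
    rw [← hx.bcond_toGPath2 hm1 hm2]
    exact ⟨hx.toGPath2.p_mem_pathSet hn1 hn2, hadj⟩
  obtain ⟨⟨k, ⟨hk1, hk2⟩, hk⟩, -⟩ := hq
  refine ⟨k, hk1, hk2, ?_, hk.symm⟩
  by_contra hki
  have hmid : i ≤ k ∧ k ≤ j := by omega
  have hDr := hx.toGPath2_r
  have hDs := hx.toGPath2_s
  have := hx.toGPath2.eq_of_p_eq hn1 hn2 (n := k) (by omega) (by omega)
    (by rw [hx.toGPath2_p hmid.1 hmid.2, hk])
  omega

/-- Both new ends would have to be the single cell of `C` outside `p_i … p_j`. -/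
lemma eq_nil_or_eq_nil (h : i - C.r + (C.s - j) ≤ 1) : x0 = [] ∨ x1 = [] := by
  by_contra! hne
  have h0 := List.length_pos_iff.2 hne.1
  have h1 := List.length_pos_iff.2 hne.2
  have ⟨hi1, hi2, hj1, hj2, _⟩ := hx
  have hDr := hx.toGPath2_r
  have hDs := hx.toGPath2_s
  have hleft : gridAdj (C.p i) (hx.toGPath2.p (i - 1)) := by
    have := hx.toGPath2.gridAdj_succ (m := i - 1) (by omega) (by omega)
    rw [sub_add_cancel, hx.toGPath2_p le_rfl (by omega)] at this
    exact gridAdj_symm this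
  have hright : gridAdj (C.p j) (hx.toGPath2.p (j + 1)) := by
    have := hx.toGPath2.gridAdj_succ (m := j) (by omega) (by omega)
    rwa [hx.toGPath2_p (by omega) le_rfl] at this
  obtain ⟨k, hk1, hk2, hk, hpk⟩ :=
    hx.exists_eq_p_of_gridAdj le_rfl (by omega) (by omega) (by omega) (by omega) hleft
  obtain ⟨k', hk'1, hk'2, hk', hpk'⟩ :=
    hx.exists_eq_p_of_gridAdj (by omega) le_rfl (by omega) (by omega) (by omega) hright
  obtain rfl : k = k' := by omega
  have := hx.toGPath2.eq_of_p_eq (by omega) (by omega) (by omega) (by omega) (hpk.trans hpk'.symm)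
  omega

lemma safe {m : ℤ} {t : ℕ} (hm : m ∈ C.MsetIdx m t)
    (hidx : C.MsetIdx m t = hx.toGPath2.MsetIdx m t)
    (hin : ∀ k ∈ C.MsetIdx m t, i ≤ k ∧ k ≤ j) (hrad : t < rad (pathSet hx.toGPath2)) :
    Safe t C :=
  safe_of_agree hm hidx (fun k hk => hx.toGPath2_p (hin k hk).1 (hin k hk).2)
    (fun k hk => hx.bcond_toGPath2 (hin k hk).1 (hin k hk).2) hrad

end IsExtPair

lemma exists_isExtPair_lt_length_left {C : GPath2} {i j : ℤ} (h : fval C i j = ⊤) (n : ℕ) :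
    ∃ x0 x1, IsExtPair C i j x0 x1 ∧ n < x0.length := by
  obtain ⟨x, ⟨⟨x0, x1⟩, hw, rfl⟩, hlt⟩ :
      ∃ x ∈ Uset C i j, (n : ENat) < x.length := by
    have hn : (n : ENat) < fval C i j := h ▸ ENat.natCast_lt_top n
    simpa only [fval, lt_iSup_iff, exists_prop] using hn
  exact ⟨x0, x1, hw, by exact_mod_cast hlt⟩

lemma exists_isExtPair_lt_length_right {C : GPath2} {i j : ℤ} (h : gval C i j = ⊤) (n : ℕ) :
    ∃ x0 x1, IsExtPair C i j x0 x1 ∧ n < x1.length := by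
  obtain ⟨x, ⟨⟨x0, x1⟩, hw, rfl⟩, hlt⟩ :
      ∃ x ∈ Vset C i j, (n : ENat) < x.length := by
    have hn : (n : ENat) < gval C i j := h ▸ ENat.natCast_lt_top n
    simpa only [gval, lt_iSup_iff, exists_prop] using hn
  exact ⟨x0, x1, hw, by exact_mod_cast hlt⟩

lemma safe_of_freeRight {C : GPath2} (h : FreeRight C) {t : ℕ} (ht : (t : ℤ) < -C.r + 2 * C.s) :
    Safe t C := by
  have hr := C.r_nonpos
  rcases h with hs | ⟨hs, hg⟩
  · exact ⟨C, .refl, by rw [C.rad_pathSet]; omega⟩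
  obtain ⟨x0, x1, hx, hlen⟩ := exists_isExtPair_lt_length_right hg t
  obtain rfl : x0 = [] :=
    (hx.eq_nil_or_eq_nil (by omega)).resolve_right (by rintro rfl; simp at hlen)
  have hDr := hx.toGPath2_r
  have hDs := hx.toGPath2_s
  simp only [List.length_nil, Nat.cast_zero, sub_zero] at hDr
  refine hx.safe (m := max C.r (-t)) ?_ ?_ ?_ ?_
  · simp only [GPath2.mem_MsetIdx]
    omega
  · ext k
    simp only [GPath2.mem_MsetIdx]
    omega
  · intro k hk
    simp only [GPath2.mem_MsetIdx] at hk
    omega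
  · rw [hx.toGPath2.rad_pathSet]
    omega

lemma safe_of_freeLeft {C : GPath2} (h : FreeLeft C) {t : ℕ} (ht : (t : ℤ) < -2 * C.r + C.s) :
    Safe t C := by
  have hs := C.s_nonneg
  rcases h with hr | ⟨hr, hf⟩
  · exact ⟨C, .refl, by rw [C.rad_pathSet]; omega⟩
  obtain ⟨x0, x1, hx, hlen⟩ := exists_isExtPair_lt_length_left hf t
  obtain rfl : x1 = [] :=
    (hx.eq_nil_or_eq_nil (by omega)).resolve_left (by rintro rfl; simp at hlen)
  have hDr := hx.toGPath2_r
  have hDs := hx.toGPath2_s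
  simp only [List.length_nil, Nat.cast_zero, add_zero] at hDs
  refine hx.safe (m := min C.s t) ?_ ?_ ?_ ?_
  · simp only [GPath2.mem_MsetIdx]
    omega
  · ext k
    simp only [GPath2.mem_MsetIdx]
    omega
  · intro k hk
    simp only [GPath2.mem_MsetIdx] at hk
    omega
  · rw [hx.toGPath2.rad_pathSet]
    omega

lemma mft_eq_of_safe_of_not_safe {C : GPath2} {n : ℕ} (hlt : ∀ t < n, Safe t C)
    (hn : ¬ Safe n C) : mft C = n :=
  le_antisymm (Nat.sInf_le hn) (le_csInf ⟨n, hn⟩ fun t ht => not_lt.1 fun h => ht (hlt t h))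

theorem stmt10 (C : GPath2) (hl : FreeLeft C) (hr : FreeRight C) :
    (mft C : ℤ) = -C.r + C.s + max (-C.r) C.s := by
  have hr0 := C.r_nonpos
  have hs0 := C.s_nonneg
  have hN : 0 ≤ -C.r + C.s + max (-C.r) C.s := by omega
  rw [mft_eq_of_safe_of_not_safe (n := (-C.r + C.s + max (-C.r) C.s).toNat) ?_
    (not_safe_of_le C (by omega)), Int.toNat_of_nonneg hN]
  intro t ht
  rcases le_total (-C.r) C.s with h | h
  · exact safe_of_freeRight hr (by omega)
  · exact safe_of_freeLeft hl (by omega)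
end

section
/- Let C = p_r … p_s be a configuration of g-2PATH of Type II with a free left hand and r < 0, and let j_0 be the smallest j with 0 ≤ j such that W(r, j) is finite. Then C satisfies CNI if and only if NI(r+1, j_0) holds. -/
open scoped Classical

/-!
Since `p_r` is an end of `C`, a consistent extension of `p_r … p_j` cannot add anything on
the left: the new neighbour of `p_r` would have to be `p_{r+1}`. So `W(r, j) = {[]} × V(r, j)`
and `NI(r, j)` always holds. Because the left hand is free, `W(r+1, s)` is infinite, and
absorbing path segments into the extensions shows that every `W(i, j)` with `r < i ≤ 0 ≤ j ≤ s`
is infinite. Hence `K`, `J` only contain pairs `(r, j)`, and `I` consists of the pairs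
`(r+1, j)` with `j₀ ≤ j`. Finally `NI(i, j₀)` implies `NI(i, j)` for `j₀ ≤ j`: two pairs in
`W(i, j)` become pairs in `W(i, j₀)` by moving `p_{j₀+1} … p_j` into the right extensions, and
the boundary conditions of `p_{j₀+1} … p_j` do not depend on the left extension, since the path
does not touch itself.
-/

open Set

section Path

variable {F : ℤ → ℤ × ℤ} {a b m n : ℤ}

lemma IsPathOn.congr {G : ℤ → ℤ × ℤ} (hF : IsPathOn F a b) (hFG : ∀ m ∈ Icc a b, F m = G m) :
    IsPathOn G a b := by
  obtain ⟨ha, hb, h0, hadj, hinj, htouch⟩ := hF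
  refine ⟨ha, hb, hFG 0 ⟨ha, hb⟩ ▸ h0, fun m hm hms => ?_, fun m n hm hms hn hns h => ?_,
    fun m n hm hmn hns => ?_⟩
  · rw [← hFG m ⟨hm, hms.le⟩, ← hFG (m + 1) ⟨by omega, hms⟩]
    exact hadj m hm hms
  · exact hinj m n hm hms hn hns (by rwa [hFG m ⟨hm, hms⟩, hFG n ⟨hn, hns⟩])
  · rw [← hFG m ⟨hm, by omega⟩, ← hFG n ⟨by omega, hns⟩]
    exact htouch m n hm hmn hns

lemma IsPathOn.eq_sub_one_or_eq_add_one (hF : IsPathOn F a b) (hm : m ∈ Icc a b)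
    (hn : n ∈ Icc a b) (hadj : gridAdj (F m) (F n)) : n = m - 1 ∨ n = m + 1 := by
  rcases lt_trichotomy n m with hnm | rfl | hmn
  · by_contra h
    exact hF.2.2.2.2.2 n m hn.1 (by omega) hm.2 (gridAdj_symm hadj)
  · exact absurd hadj (gridAdj_irrefl _)
  · by_contra h
    exact hF.2.2.2.2.2 m n hm.1 (by omega) hn.2 hadj

lemma IsPathOn.bcond_image (hF : IsPathOn F a b) (hm : m ∈ Icc a b) :
    bcond (F '' Icc a b) (F m) = F '' (Icc a b ∩ {m - 1, m + 1}) := by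
  ext q
  constructor
  · rintro ⟨⟨n, hn, rfl⟩, hadj⟩
    exact ⟨n, ⟨hn, hF.eq_sub_one_or_eq_add_one hm hn hadj⟩, rfl⟩
  · rintro ⟨n, ⟨hn, rfl | rfl⟩, rfl⟩
    · refine ⟨mem_image_of_mem F hn, gridAdj_symm ?_⟩
      simpa using hF.2.2.2.1 (m - 1) hn.1 (by have := hm.2; omega)
    · exact ⟨mem_image_of_mem F hn, hF.2.2.2.1 m hm.1 (by have := hn.2; omega)⟩

end Path

def pathSegment (C : GPath2) (a b : ℤ) : List (ℤ × ℤ) :=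
  (List.range (b + 1 - a).toNat).map fun k : ℕ => C.p (a + k)

lemma length_pathSegment (C : GPath2) (a b : ℤ) :
    (pathSegment C a b).length = (b + 1 - a).toNat := by
  simp [pathSegment]

lemma getD_pathSegment (C : GPath2) (a b : ℤ) (k : ℕ) (d : ℤ × ℤ) :
    (pathSegment C a b).getD k d = if (k : ℤ) < b + 1 - a then C.p (a + k) else d := by
  rw [pathSegment, List.getD_eq_getElem?_getD, List.getElem?_map]
  by_cases h : k < (b + 1 - a).toNat
  · rw [List.getElem?_range h, if_pos (by omega)]
    rfl
  · rw [List.getElem?_eq_none (by rw [List.length_range]; omega), if_neg (by omega)]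
    rfl

section ExtFun

variable {C : GPath2} {i i' j j' m : ℤ} (x0 x1 : List (ℤ × ℤ))

lemma extFun_of_lt (h : m < i) :
    extFun C i j x0 x1 m = x0.getD (m - (i - x0.length)).toNat (0, 0) :=
  if_pos h

lemma extFun_of_mem (h1 : i ≤ m) (h2 : m ≤ j) : extFun C i j x0 x1 m = C.p m := by
  rw [extFun, if_neg (not_lt.mpr h1), if_pos h2]

lemma extFun_of_gt (hij : i ≤ j) (h : j < m) :
    extFun C i j x0 x1 m = x1.getD (m - (j + 1)).toNat (0, 0) := by
  rw [extFun, if_neg (by omega), if_neg (not_le.mpr h)]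

lemma extFun_congr_left (y0 : List (ℤ × ℤ)) (h : i ≤ m) :
    extFun C i j x0 x1 m = extFun C i j y0 x1 m := by
  simp only [extFun, if_neg (not_lt.mpr h)]

lemma extFun_pathSegment_append (hij : i ≤ j) (hjj' : j ≤ j') :
    extFun C i j x0 (pathSegment C (j + 1) j' ++ x1) = extFun C i j' x0 x1 := by
  funext m
  rcases lt_or_ge m i with h | h
  · rw [extFun_of_lt _ _ h, extFun_of_lt _ _ h]
  rcases le_or_gt m j with h2 | h2
  · rw [extFun_of_mem _ _ h h2, extFun_of_mem _ _ h (h2.trans hjj')]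
  rw [extFun_of_gt _ _ hij h2]
  rcases le_or_gt m j' with h3 | h3
  · rw [extFun_of_mem _ _ h h3, List.getD_append _ _ _ _ (by rw [length_pathSegment]; omega),
      getD_pathSegment, if_pos (by omega)]
    congr 1
    omega
  · rw [extFun_of_gt _ _ (hij.trans hjj') h3,
      List.getD_append_right _ _ _ _ (by rw [length_pathSegment]; omega), length_pathSegment]
    congr 2
    omega

lemma extFun_append_pathSegment (hii' : i' ≤ i) (hij : i ≤ j) (hm : i' - x0.length ≤ m) :
    extFun C i j (x0 ++ pathSegment C i' (i - 1)) x1 m = extFun C i' j x0 x1 m := by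
  rcases le_or_gt i m with h | h
  · rcases le_or_gt m j with h2 | h2
    · rw [extFun_of_mem _ _ h h2, extFun_of_mem _ _ (hii'.trans h) h2]
    · rw [extFun_of_gt _ _ hij h2, extFun_of_gt _ _ (hii'.trans hij) h2]
  have hlen : ((x0 ++ pathSegment C i' (i - 1)).length : ℤ) = x0.length + (i - i') := by
    simp only [List.length_append, length_pathSegment, Nat.cast_add]
    omega
  rw [extFun_of_lt _ _ h]
  rcases lt_or_ge m i' with h2 | h2
  · rw [extFun_of_lt _ _ h2, List.getD_append _ _ _ _ (by omega)]
    congr 2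
    omega
  · rw [extFun_of_mem _ _ h2 (by omega), List.getD_append_right _ _ _ _ (by omega),
      getD_pathSegment, if_pos (by omega)]
    congr 1
    omega

end ExtFun

section Wset

variable {C : GPath2} {i i' j j' m : ℤ} {x0 x1 y0 : List (ℤ × ℤ)}

lemma mem_Wset : (x0, x1) ∈ Wset C i j ↔ IsExtPair C i j x0 x1 := Iff.rfl

lemma pathSegment_append_mem_Wset (hj : 0 ≤ j) (hjj' : j ≤ j') (h : (x0, x1) ∈ Wset C i j') :
    (x0, pathSegment C (j + 1) j' ++ x1) ∈ Wset C i j := by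
  obtain ⟨hri, hi, -, hjs, hpath, hbc⟩ := mem_Wset.mp h
  have hlen : j + ((pathSegment C (j + 1) j' ++ x1).length : ℤ) = j' + x1.length := by
    simp only [List.length_append, length_pathSegment, Nat.cast_add]
    omega
  rw [mem_Wset, IsExtPair, extFun_pathSegment_append x0 x1 (hi.trans hj) hjj', hlen]
  exact ⟨hri, hi, hj, hjj'.trans hjs, hpath, fun m him hmj => hbc m him (hmj.trans hjj')⟩

lemma append_pathSegment_mem_Wset (hii' : i' ≤ i) (hi : i ≤ 0) (h : (x0, x1) ∈ Wset C i' j) :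
    (x0 ++ pathSegment C i' (i - 1), x1) ∈ Wset C i j := by
  obtain ⟨hri, -, hj, hjs, hpath, hbc⟩ := mem_Wset.mp h
  have hlen : i - ((x0 ++ pathSegment C i' (i - 1)).length : ℤ) = i' - x0.length := by
    simp only [List.length_append, length_pathSegment, Nat.cast_add]
    omega
  have hfun : ∀ m ∈ Icc (i' - x0.length) (j + x1.length),
      extFun C i' j x0 x1 m = extFun C i j (x0 ++ pathSegment C i' (i - 1)) x1 m :=
    fun m hm => (extFun_append_pathSegment x0 x1 hii' (hi.trans hj) hm.1).symm
  rw [mem_Wset, IsExtPair, hlen, ← image_congr hfun]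
  exact ⟨hri.trans hii', hi, hj, hjs, hpath.congr hfun, fun m him hmj => hbc m (hii'.trans him) hmj⟩

lemma Wset_infinite_of_fval_eq_top (h : fval C i j = ⊤) : (Wset C i j).Infinite := by
  intro hfin
  obtain ⟨N, hN⟩ := ((hfin.image Prod.fst).image List.length).bddAbove
  have : fval C i j ≤ N := iSup₂_le fun x hx => by exact_mod_cast hN (mem_image_of_mem _ hx)
  exact ENat.natCast_ne_top N (top_le_iff.mp (h ▸ this))

lemma Wset_infinite_of_le (h : (Wset C i' j').Infinite) (hii' : i' ≤ i) (hi : i ≤ 0)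
    (hj : 0 ≤ j) (hjj' : j ≤ j') : (Wset C i j).Infinite := by
  have hinj : Function.Injective fun w : List (ℤ × ℤ) × List (ℤ × ℤ) =>
      (w.1 ++ pathSegment C i' (i - 1), pathSegment C (j + 1) j' ++ w.2) := by
    rintro ⟨_, _⟩ ⟨_, _⟩ hw
    simp only [Prod.mk.injEq] at hw
    exact Prod.ext (List.append_cancel_right hw.1) (List.append_cancel_left hw.2)
  refine (h.image hinj.injOn).mono ?_
  rintro _ ⟨⟨x0, x1⟩, hw, rfl⟩
  exact append_pathSegment_mem_Wset hii' hi (pathSegment_append_mem_Wset hj hjj' hw)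

/-- The neighbours of `p_m` in either extended path are `p_{m-1}` and `p_{m+1}`, whose
indices are `≥ i`. -/
lemma bcond_extFun_congr_left
    (hx : IsPathOn (extFun C i j x0 x1) (i - x0.length) (j + x1.length))
    (hy : IsPathOn (extFun C i j y0 x1) (i - y0.length) (j + x1.length))
    (him : i < m) (hmj : m ≤ j) :
    bcond (extFun C i j x0 x1 '' Icc (i - x0.length) (j + x1.length)) (C.p m) =
      bcond (extFun C i j y0 x1 '' Icc (i - y0.length) (j + x1.length)) (C.p m) := by
  have hxm := extFun_of_mem (C := C) x0 x1 him.le hmj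
  have hym := extFun_of_mem (C := C) y0 x1 him.le hmj
  conv_lhs => rw [← hxm, hx.bcond_image ⟨by omega, by omega⟩]
  conv_rhs => rw [← hym, hy.bcond_image ⟨by omega, by omega⟩]
  have hidx : ∀ a : ℤ, a ≤ i →
      Icc a (j + x1.length) ∩ {m - 1, m + 1} = Icc i (j + x1.length) ∩ {m - 1, m + 1} := by
    intro a ha
    ext n
    simp only [mem_inter_iff, mem_Icc, mem_insert_iff, mem_singleton_iff]
    omega
  rw [hidx (i - x0.length) (by omega), hidx (i - y0.length) (by omega)]
  exact image_congr fun n hn => extFun_congr_left x0 x1 y0 hn.1.1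

end Wset

section NI

variable {C : GPath2} {i j j0 : ℤ}

lemma NI_iff : NI C i j ↔ ∀ x0 x1 y0 y1, (x0, x1) ∈ Wset C i j → (y0, y1) ∈ Wset C i j →
    (x0, y1) ∈ Wset C i j := by
  constructor
  · intro h x0 x1 y0 y1 hx hy
    rw [NI] at h
    rw [h]
    exact ⟨⟨_, hx, rfl⟩, ⟨_, hy, rfl⟩⟩
  · rintro h
    refine subset_fst_image_prod_snd_image.antisymm ?_
    rintro ⟨_, _⟩ ⟨⟨⟨_, _⟩, hx, rfl⟩, ⟨⟨_, _⟩, hy, rfl⟩⟩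
    exact h _ _ _ _ hx hy

/-- A left extension gives the end `p_r` the new neighbour `F (r - 1)`, which must lie in
`bcond C p_r = {p_{r+1}}`; this contradicts injectivity of the extended path `F`. -/
lemma eq_nil_of_mem_Wset_r (hr : C.r < 0) {x0 x1 : List (ℤ × ℤ)}
    (h : (x0, x1) ∈ Wset C C.r j) : x0 = [] := by
  obtain ⟨-, -, hj, hjs, hF, hbc⟩ := mem_Wset.mp h
  set F := extFun C C.r j x0 x1
  by_contra hne
  have hlen : 1 ≤ x0.length := List.length_pos_iff.mpr hne
  have hFr : F C.r = C.p C.r := extFun_of_mem x0 x1 le_rfl (by omega)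
  have hq : F (C.r - 1) ∈ bcond (F '' Icc (C.r - x0.length) (j + x1.length)) (C.p C.r) := by
    rw [← hFr, hF.bcond_image ⟨by omega, by omega⟩]
    exact mem_image_of_mem F ⟨⟨by omega, by omega⟩, Or.inl rfl⟩
  rw [← hbc C.r le_rfl (by omega), pathSet, C.isPath.bcond_image ⟨le_rfl, by omega⟩] at hq
  obtain ⟨n, ⟨hn, hn'⟩, hFn⟩ := hq
  have hn : n = C.r + 1 := by
    simp only [mem_Icc, mem_insert_iff, mem_singleton_iff] at hn hn'
    omega
  have hF1 : F (C.r + 1) = C.p (C.r + 1) := extFun_of_mem x0 x1 (by omega) (by omega)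
  have := hF.2.2.2.2.1 (C.r - 1) (C.r + 1) (by omega) (by omega) (by omega) (by omega)
    (by rw [hF1, ← hFn, hn])
  omega

lemma NI_r (hr : C.r < 0) (j : ℤ) : NI C C.r j :=
  NI_iff.mpr fun x0 x1 y0 y1 hx hy => by
    rwa [eq_nil_of_mem_Wset_r hr hx, ← eq_nil_of_mem_Wset_r hr hy]

lemma NI.of_le_right (h : NI C i j0) (hj0 : 0 ≤ j0) (hj : j0 ≤ j) : NI C i j := by
  rw [NI_iff] at h ⊢
  intro x0 x1 y0 y1 hx hy
  have hxy := h _ _ _ _ (pathSegment_append_mem_Wset hj0 hj hx)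
    (pathSegment_append_mem_Wset hj0 hj hy)
  obtain ⟨-, -, -, hjs, hpy, hbcy⟩ := mem_Wset.mp hy
  obtain ⟨hri, hi, -, -, hpath, hbc⟩ := mem_Wset.mp hxy
  have hlen : j0 + ((pathSegment C (j0 + 1) j ++ y1).length : ℤ) = j + y1.length := by
    simp only [List.length_append, length_pathSegment, Nat.cast_add]
    omega
  rw [extFun_pathSegment_append x0 y1 (hi.trans hj0) hj, hlen] at hpath hbc
  refine ⟨hri, hi, hj0.trans hj, hjs, hpath, fun m him hmj => ?_⟩
  rcases le_or_gt m j0 with hm | hm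
  · exact hbc m him hm
  · rw [hbcy m him hmj]
    exact bcond_extFun_congr_left hpy hpath (by omega) hmj

end NI

theorem stmt12_general (C : GPath2) (hl : FreeLeft C) (hneg : C.r < 0)
    (j0 : ℤ) (hj0 : 0 ≤ j0) (hfin : (Wset C C.r j0).Finite)
    (hmin : ∀ j : ℤ, 0 ≤ j → j < j0 → ¬ (Wset C C.r j).Finite) :
    CNI C ↔ NI C (C.r + 1) j0 := by
  have hfree : fval C (C.r + 1) C.s = ⊤ := hl.resolve_left hneg.ne |>.2
  have hinf {i j : ℤ} (hri : C.r < i) (hi : i ≤ 0) (hj : 0 ≤ j) (hjs : j ≤ C.s) :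
      (Wset C i j).Infinite :=
    Wset_infinite_of_le (Wset_infinite_of_fval_eq_top hfree) hri hi hj hjs
  constructor
  · intro hcni
    by_cases hj0s : j0 ≤ C.s
    · exact hcni (C.r + 1, j0) (Or.inl (Or.inr ⟨by omega, by omega, hj0, hj0s,
        hinf (by omega) (by omega) hj0 hj0s, by simpa using hfin⟩))
    · exact NI_iff.mpr fun _ _ _ _ hx => absurd (mem_Wset.mp hx).2.2.2.1 (by omega)
  · rintro hni ⟨i, j⟩ ((⟨hri, hi, hj, hjs, hW⟩ | ⟨hri, hi, hj, hjs, -, hW⟩) |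
      ⟨hri, hi, hj, hjs, -, hW⟩)
    · obtain rfl : i = C.r := by
        by_contra hne
        exact hinf (by omega) hi hj hjs hW
      exact NI_r hneg j
    · obtain rfl : i = C.r + 1 := by
        by_contra hne
        exact hinf (by omega) (by omega) hj hjs hW
      have hj0j : j0 ≤ j := by
        by_contra hlt
        exact hmin j hj (by omega) (by simpa using hW)
      exact hni.of_le_right hj0 hj0j
    · obtain rfl : i = C.r := by
        by_contra hne
        exact hinf (by omega) hi (by omega) hjs hW
      exact NI_r hneg j

theorem stmt12 (C : GPath2) (hl : FreeLeft C) (hr : ¬ FreeRight C) (hneg : C.r < 0)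
    (j0 : ℤ) (hj0 : 0 ≤ j0) (hfin : (Wset C C.r j0).Finite)
    (hmin : ∀ j : ℤ, 0 ≤ j → j < j0 → ¬ (Wset C C.r j).Finite) :
    CNI C ↔ NI C (C.r + 1) j0 :=
  stmt12_general C hl hneg j0 hj0 hfin hmin
end
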